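/- arXiv:2508.15770 — 2 statements merged into one kernel-verified Lean document; each statement's English description precedes it below -/
import Mathlib

section
/- Let R be a commutative ring, m, n natural numbers with 1 ≤ m ≤ n, and f₁, f₂ ∈ R[T] polynomials each of degree at most m - 1. Let g ∈ R[X,Y] be the (unique) polynomial with (X+Y)·g = (f₁(X) - f₁(-Y)) · (f₂(X) - f₂(-Y)). Then the coefficient of the monomial X^(m-1) Y^(n-1) in g is zero. -/
/-!
Substituting `X` and `-Y` into a polynomial of degree at most `m - 1` gives total degree at most
`m - 1`, so `(X + Y) * g` has total degree at most `2m - 2`. Comparing coefficients in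
`(X + Y) * g`, the coefficients of `g` along each antidiagonal `a + b = k` with `k ≥ 2m - 2`
satisfy `g_{k,0} = 0` and `g_{a,b+1} + g_{a+1,b} = 0`; walking along the antidiagonal from
`(k, 0)` shows they all vanish. The exponent `(m - 1, n - 1)` lies on such an antidiagonal
because `m ≤ n`.
-/

open MvPolynomial

namespace MvPolynomial

variable {σ R : Type*}

theorem totalDegree_X_le [CommSemiring R] (i : σ) : (X i : MvPolynomial σ R).totalDegree ≤ 1 :=
  (totalDegree_monomial_le _ _).trans (by simp)

theorem totalDegree_aeval_le [CommSemiring R] (f : Polynomial R) (x : MvPolynomial σ R) :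
    (Polynomial.aeval x f).totalDegree ≤ f.natDegree * x.totalDegree := by
  rw [Polynomial.aeval_eq_sum_range]
  refine totalDegree_finsetSum_le fun i hi => ?_
  calc (f.coeff i • x ^ i).totalDegree ≤ (x ^ i).totalDegree := totalDegree_smul_le _ _
    _ ≤ i * x.totalDegree := totalDegree_pow _ _
    _ ≤ f.natDegree * x.totalDegree :=
      Nat.mul_le_mul_right _ (Nat.lt_succ_iff.mp (Finset.mem_range.mp hi))

theorem totalDegree_aeval_X_sub_aeval_neg_X_le [CommRing R] (f : Polynomial R) (i j : σ) :
    (Polynomial.aeval (X i : MvPolynomial σ R) f - Polynomial.aeval (-X j) f).totalDegree ≤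
      f.natDegree := by
  have hdeg (x : MvPolynomial σ R) (hx : x.totalDegree ≤ 1) :
      (Polynomial.aeval x f).totalDegree ≤ f.natDegree :=
    (totalDegree_aeval_le f x).trans (by simpa using Nat.mul_le_mul_left f.natDegree hx)
  exact (totalDegree_sub _ _).trans <| max_le (hdeg _ (totalDegree_X_le i))
    (hdeg _ ((totalDegree_neg _).trans_le (totalDegree_X_le j)))

section Bivariate

variable [CommRing R]

theorem coeff_X_add_X_mul_single_succ_add_single_succ (g : MvPolynomial (Fin 2) R) (a b : ℕ) :
    coeff (Finsupp.single 0 (a + 1) + Finsupp.single 1 (b + 1)) ((X 0 + X 1) * g) =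
      coeff (Finsupp.single 0 a + Finsupp.single 1 (b + 1)) g +
        coeff (Finsupp.single 0 (a + 1) + Finsupp.single 1 b) g := by
  have h₀ : Finsupp.single (0 : Fin 2) (a + 1) + Finsupp.single 1 (b + 1) =
      Finsupp.single 0 1 + (Finsupp.single 0 a + Finsupp.single 1 (b + 1)) := by
    rw [← add_assoc, ← Finsupp.single_add, add_comm 1 a]
  have h₁ : Finsupp.single (0 : Fin 2) (a + 1) + Finsupp.single 1 (b + 1) =
      Finsupp.single 1 1 + (Finsupp.single 0 (a + 1) + Finsupp.single 1 b) := by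
    rw [add_left_comm, ← Finsupp.single_add, add_comm 1 b]
  rw [add_mul, coeff_add]
  nth_rw 1 [h₀]
  rw [h₁, coeff_X_mul, coeff_X_mul]

theorem coeff_X_add_X_mul_single_succ (g : MvPolynomial (Fin 2) R) (a : ℕ) :
    coeff (Finsupp.single 0 (a + 1)) ((X 0 + X 1) * g) = coeff (Finsupp.single 0 a) g := by
  classical
  have h₀ : Finsupp.single (0 : Fin 2) (a + 1) = Finsupp.single 0 1 + Finsupp.single 0 a := by
    rw [← Finsupp.single_add, add_comm]
  rw [add_mul, coeff_add, coeff_X_mul' _ 1, if_neg (by simp), add_zero, h₀, coeff_X_mul]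

theorem coeff_eq_zero_of_totalDegree_X_add_X_mul_le {g : MvPolynomial (Fin 2) R} {d : ℕ}
    (hg : ((X 0 + X 1) * g).totalDegree ≤ d) {a b : ℕ} (hab : d ≤ a + b) :
    coeff (Finsupp.single 0 a + Finsupp.single 1 b) g = 0 := by
  have hprod (a b : ℕ) (hab : d < a + b) :
      coeff (Finsupp.single 0 a + Finsupp.single 1 b) ((X 0 + X 1) * g) = 0 :=
    coeff_eq_zero_of_totalDegree_lt <| hg.trans_lt <| by
      change d < Finsupp.degree _
      simpa using hab
  induction b generalizing a with
  | zero =>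
    have := hprod (a + 1) 0 (by omega)
    rw [Finsupp.single_zero, add_zero] at this ⊢
    rwa [coeff_X_add_X_mul_single_succ] at this
  | succ b ih =>
    have := hprod (a + 1) (b + 1) (by omega)
    rwa [coeff_X_add_X_mul_single_succ_add_single_succ, ih (by omega), add_zero] at this

end Bivariate

end MvPolynomial

theorem coeff_vanishing_flip_pairing_general {R : Type*} [CommRing R] (m n : ℕ)
    (hmn : m ≤ n) (f₁ f₂ : Polynomial R)
    (h₁ : f₁.natDegree ≤ m - 1) (h₂ : f₂.natDegree ≤ m - 1)
    (g : MvPolynomial (Fin 2) R)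
    (hg : (X 0 + X 1) * g =
        (Polynomial.aeval (X 0 : MvPolynomial (Fin 2) R) f₁ -
            Polynomial.aeval (-(X 1) : MvPolynomial (Fin 2) R) f₁) *
          (Polynomial.aeval (X 0 : MvPolynomial (Fin 2) R) f₂ -
            Polynomial.aeval (-(X 1) : MvPolynomial (Fin 2) R) f₂)) :
    MvPolynomial.coeff (Finsupp.single 0 (m - 1) + Finsupp.single 1 (n - 1)) g = 0 := by
  have hdeg : ((X 0 + X 1) * g).totalDegree ≤ (m - 1) + (m - 1) := by
    rw [hg]
    exact (totalDegree_mul _ _).trans <| Nat.add_le_add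
      ((totalDegree_aeval_X_sub_aeval_neg_X_le f₁ 0 1).trans h₁)
      ((totalDegree_aeval_X_sub_aeval_neg_X_le f₂ 0 1).trans h₂)
  exact coeff_eq_zero_of_totalDegree_X_add_X_mul_le hdeg (by omega)

/-- Let `1 ≤ m ≤ n` and `f₁, f₂ ∈ R[T]` of degree at most `m - 1`. If
`(X+Y)·g = (f₁(X) - f₁(-Y)) · (f₂(X) - f₂(-Y))` in `R[X,Y]`, then the coefficient
of `X^(m-1) Y^(n-1)` in `g` is zero. -/
theorem coeff_vanishing_flip_pairing {R : Type*} [CommRing R] (m n : ℕ)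
    (hm : 1 ≤ m) (hmn : m ≤ n) (f₁ f₂ : Polynomial R)
    (h₁ : f₁.natDegree ≤ m - 1) (h₂ : f₂.natDegree ≤ m - 1)
    (g : MvPolynomial (Fin 2) R)
    (hg : (X 0 + X 1) * g =
        (Polynomial.aeval (X 0 : MvPolynomial (Fin 2) R) f₁ -
            Polynomial.aeval (-(X 1) : MvPolynomial (Fin 2) R) f₁) *
          (Polynomial.aeval (X 0 : MvPolynomial (Fin 2) R) f₂ -
            Polynomial.aeval (-(X 1) : MvPolynomial (Fin 2) R) f₂)) :
    MvPolynomial.coeff (Finsupp.single 0 (m - 1) + Finsupp.single 1 (n - 1)) g = 0 :=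
  coeff_vanishing_flip_pairing_general m n hmn f₁ f₂ h₁ h₂ g hg
end

section
/- Let R be a commutative ring, r ≥ 1, and p = X^r + c₁X^(r-1) + ... + c_r ∈ R[X] monic, and set A = R[X]/(p). Let s = X^(r-1) + c₁X^(r-2) + ... + c_{r-1} ∈ A. Then: (a) X·s = -c_r in A; (b) for any β ∈ A, if X·β lies in the image of the structure map R → A, then β ∈ R·s; in particular, moreover, if β is represented by a polynomial of degree ≤ r-1 with coefficient of X^(r-1) equal to a ∈ R, then β = a·s. -/
/-!
Write `p = X * s + C c_r`; this gives (a) at once. If `X * f ≡ b` modulo `p` with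
`deg f < r`, then `X * f - b = p * q` has degree at most `r`, and since `p` is monic the
cofactor `q` is a constant `a`. Hence `X * (f - a * s)` is a constant, which forces
`f = a * s`, and comparing the coefficients of `X ^ (r - 1)` (where `s` has a `1`) gives
`a = f.coeff (r - 1)`. Every class in `R[X] ⧸ (p)` has such a representative, `f %ₘ p`.
-/

open Polynomial

namespace Polynomial

variable {R : Type*} [CommRing R]

theorem eq_zero_of_X_mul_eq_C {h : R[X]} {d : R} (hXh : X * h = C d) : h = 0 := by
  ext j
  simpa [coeff_X_mul, coeff_C] using congrArg (coeff · (j + 1)) hXh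

theorem sum_range_succ_C_mul_X_pow_sub (r : ℕ) (c : ℕ → R) :
    ∑ i ∈ Finset.range (r + 1), C (c i) * X ^ (r - i) =
      X * ∑ i ∈ Finset.range r, C (c i) * X ^ (r - 1 - i) + C (c r) := by
  rw [Finset.sum_range_succ, Nat.sub_self, pow_zero, mul_one, Finset.mul_sum]
  congr 1
  refine Finset.sum_congr rfl fun i hi => ?_
  rw [show r - i = r - 1 - i + 1 by have := Finset.mem_range.mp hi; omega, pow_succ]
  ring

theorem natDegree_sum_C_mul_X_pow_sub_le (r : ℕ) (c : ℕ → R) :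
    (∑ i ∈ Finset.range (r + 1), C (c i) * X ^ (r - i)).natDegree ≤ r :=
  natDegree_sum_le_of_forall_le _ _ fun _ _ =>
    natDegree_C_mul_X_pow_le _ _ |>.trans (Nat.sub_le _ _)

theorem coeff_sum_C_mul_X_pow_sub_self (r : ℕ) (c : ℕ → R) :
    (∑ i ∈ Finset.range (r + 1), C (c i) * X ^ (r - i)).coeff r = c 0 := by
  rw [finsetSum_coeff, Finset.sum_eq_single_of_mem 0 (by simp)]
  · simp
  · intro i hi hi0
    rw [coeff_C_mul_X_pow, if_neg (by have := Finset.mem_range.mp hi; omega)]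

theorem monic_sum_C_mul_X_pow_sub (r : ℕ) {c : ℕ → R} (hc0 : c 0 = 1) :
    (∑ i ∈ Finset.range (r + 1), C (c i) * X ^ (r - i)).Monic :=
  monic_of_natDegree_le_of_coeff_eq_one r (natDegree_sum_C_mul_X_pow_sub_le r c)
    (by rw [coeff_sum_C_mul_X_pow_sub_self, hc0])

theorem natDegree_sum_C_mul_X_pow_sub [Nontrivial R] (r : ℕ) {c : ℕ → R} (hc0 : c 0 = 1) :
    (∑ i ∈ Finset.range (r + 1), C (c i) * X ^ (r - i)).natDegree = r :=
  natDegree_eq_of_le_of_coeff_ne_zero (natDegree_sum_C_mul_X_pow_sub_le r c)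
    (by rw [coeff_sum_C_mul_X_pow_sub_self, hc0]; exact one_ne_zero)

variable {p s : R[X]} {c : R}

theorem Monic.coeff_natDegree_sub_one_of_eq_X_mul_add_C (hm : p.Monic) (hp : 0 < p.natDegree)
    (hps : p = X * s + C c) : s.coeff (p.natDegree - 1) = 1 := by
  obtain ⟨n, hn⟩ := Nat.exists_eq_succ_of_ne_zero hp.ne'
  have h := hm.coeff_natDegree
  rw [hn] at h ⊢
  rwa [hps, coeff_add, coeff_X_mul, coeff_C, if_neg n.succ_ne_zero, add_zero] at h

theorem Monic.exists_eq_C_mul_of_dvd_X_mul_sub_C (hm : p.Monic) (hps : p = X * s + C c)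
    {f : R[X]} (hf : f.natDegree < p.natDegree) {b : R} (hdvd : p ∣ X * f - C b) :
    ∃ a, f = C a * s := by
  obtain ⟨q, hq⟩ := hdvd
  have hq0 : q.natDegree = 0 := by
    rcases eq_or_ne q 0 with rfl | hq0
    · simp
    have hXf : (X * f).natDegree ≤ f.natDegree + 1 :=
      (natDegree_mul_le.trans (Nat.add_le_add_right natDegree_X_le _)).trans_eq (add_comm _ _)
    have hle : (X * f - C b).natDegree ≤ p.natDegree :=
      (natDegree_sub_le _ _).trans <| max_le (hXf.trans hf) (by simp)
    rw [hq, hm.natDegree_mul' hq0] at hle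
    omega
  refine ⟨q.coeff 0, sub_eq_zero.mp (eq_zero_of_X_mul_eq_C (d := b + q.coeff 0 * c) ?_)⟩
  rw [eq_C_of_natDegree_eq_zero hq0, hps] at hq
  rw [map_add, map_mul]
  linear_combination hq

theorem Monic.exists_natDegree_lt_mk_eq (hm : p.Monic) (hp : 0 < p.natDegree)
    (β : R[X] ⧸ Ideal.span {p}) :
    ∃ f : R[X], f.natDegree < p.natDegree ∧ Ideal.Quotient.mk (Ideal.span {p}) f = β := by
  obtain ⟨f, rfl⟩ := Ideal.Quotient.mk_surjective β
  refine ⟨f %ₘ p, natDegree_modByMonic_lt f hm (fun h => by simp [h] at hp), ?_⟩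
  rw [Ideal.Quotient.eq, Ideal.mem_span_singleton, modByMonic_eq_sub_mul_div]
  exact ⟨-(f /ₘ p), by ring⟩

theorem dvd_X_mul_sub_C_of_mk_X_mul_mem_range {f : R[X]}
    (hf : Ideal.Quotient.mk (Ideal.span {p}) X * Ideal.Quotient.mk _ f ∈
      Set.range (algebraMap R (R[X] ⧸ Ideal.span {p}))) : ∃ b, p ∣ X * f - C b := by
  obtain ⟨b, hb⟩ := hf
  refine ⟨b, Ideal.mem_span_singleton.mp (Ideal.Quotient.eq.mp ?_)⟩
  rw [map_mul, ← hb]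
  rfl

theorem smul_mk_eq_mk_C_mul (a : R) (f : R[X]) :
    a • Ideal.Quotient.mk (Ideal.span {p}) f = Ideal.Quotient.mk _ (C a * f) := by
  rw [← smul_eq_C_mul]
  rfl

theorem Monic.mk_eq_coeff_smul_mk_of_X_mul_mem_range (hm : p.Monic) (hps : p = X * s + C c)
    {f : R[X]} (hf : f.natDegree < p.natDegree)
    (hX : Ideal.Quotient.mk (Ideal.span {p}) X * Ideal.Quotient.mk _ f ∈
      Set.range (algebraMap R (R[X] ⧸ Ideal.span {p}))) :
    Ideal.Quotient.mk (Ideal.span {p}) f =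
      f.coeff (p.natDegree - 1) • Ideal.Quotient.mk (Ideal.span {p}) s := by
  obtain ⟨b, hb⟩ := dvd_X_mul_sub_C_of_mk_X_mul_mem_range hX
  obtain ⟨a, rfl⟩ := hm.exists_eq_C_mul_of_dvd_X_mul_sub_C hps hf hb
  rw [coeff_C_mul, hm.coeff_natDegree_sub_one_of_eq_X_mul_add_C (by omega) hps, mul_one,
    smul_mk_eq_mk_C_mul]

theorem Monic.exists_eq_smul_mk_of_X_mul_mem_range (hm : p.Monic) (hps : p = X * s + C c)
    (hp : 0 < p.natDegree) (β : R[X] ⧸ Ideal.span {p})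
    (hX : Ideal.Quotient.mk (Ideal.span {p}) X * β ∈
      Set.range (algebraMap R (R[X] ⧸ Ideal.span {p}))) :
    ∃ a : R, β = a • Ideal.Quotient.mk (Ideal.span {p}) s := by
  obtain ⟨f, hf, rfl⟩ := hm.exists_natDegree_lt_mk_eq hp β
  exact ⟨_, hm.mk_eq_coeff_smul_mk_of_X_mul_mem_range hps hf hX⟩

end Polynomial

/-- Let `p = X^r + c₁X^(r-1) + ... + c_r` be monic (with `c₀ = 1`),
`A = R[X]/(p)`, and `s = X^(r-1) + c₁X^(r-2) + ... + c_{r-1}` in `A`. Then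
(a) `X·s = -c_r` in `A`; (b) if `X·β` lies in the image of `R → A` then β ∈ R·s;
(c) if moreover `β` is represented by a polynomial of degree ≤ r-1 with
coefficient of `X^(r-1)` equal to `a`, then `β = a·s`. -/
theorem quotient_hyperplane_class_lemma {R : Type*} [CommRing R] (r : ℕ) (hr : 1 ≤ r)
    (c : ℕ → R) (hc0 : c 0 = 1) (p : Polynomial R)
    (hp : p = ∑ i ∈ Finset.range (r + 1), Polynomial.C (c i) * Polynomial.X ^ (r - i))
    (s : Polynomial R)
    (hs : s = ∑ i ∈ Finset.range r, Polynomial.C (c i) * Polynomial.X ^ (r - 1 - i)) :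
    (Ideal.Quotient.mk (Ideal.span {p}) (Polynomial.X * s) =
        Ideal.Quotient.mk (Ideal.span {p}) (Polynomial.C (-(c r)))) ∧
    (∀ β : Polynomial R ⧸ Ideal.span {p},
        Ideal.Quotient.mk (Ideal.span {p}) Polynomial.X * β ∈
            Set.range (algebraMap R (Polynomial R ⧸ Ideal.span {p})) →
          ∃ a : R, β = a • Ideal.Quotient.mk (Ideal.span {p}) s) ∧
    (∀ f : Polynomial R, f.natDegree ≤ r - 1 →
        Ideal.Quotient.mk (Ideal.span {p}) Polynomial.X *
              Ideal.Quotient.mk (Ideal.span {p}) f ∈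
            Set.range (algebraMap R (Polynomial R ⧸ Ideal.span {p})) →
          Ideal.Quotient.mk (Ideal.span {p}) f =
            f.coeff (r - 1) • Ideal.Quotient.mk (Ideal.span {p}) s) := by
  have hps : p = X * s + C (c r) := hp ▸ hs ▸ sum_range_succ_C_mul_X_pow_sub r c
  have hm : p.Monic := hp ▸ monic_sum_C_mul_X_pow_sub r hc0
  refine ⟨?_, ?_⟩
  · rw [Ideal.Quotient.eq, map_neg, sub_neg_eq_add, ← hps]
    exact Ideal.mem_span_singleton_self p
  nontriviality R
  have hdeg : p.natDegree = r := hp ▸ natDegree_sum_C_mul_X_pow_sub r hc0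
  refine ⟨hm.exists_eq_smul_mk_of_X_mul_mem_range hps (by omega), fun f hf hX => ?_⟩
  rw [← hdeg] at hf ⊢
  exact hm.mk_eq_coeff_smul_mk_of_X_mul_mem_range hps (by omega) hX
end
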